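/- arXiv:2403.17705 — 2 statements merged into one kernel-verified Lean document; each statement's English description precedes it below -/
import Mathlib

section
/- The set of convex polygons in the plane whose diameter is attained along a unique segment is dense in the space of all compact convex polygons (convex hulls of finite sets of at least two points) with respect to the Hausdorff metric. -/
open Real Metric Set

/-- The unit vector in the plane corresponding to the angle `θ`. -/
noncomputable def unitVec (θ : ℝ) : EuclideanSpace ℝ (Fin 2) :=
  WithLp.toLp 2 ![Real.cos θ, Real.sin θ]

/-- The parametrized projection-length function of a planar set. -/
noncomputable def projLen (A : Set (EuclideanSpace ℝ (Fin 2))) (θ : ℝ) : ℝ :=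
  sSup ((fun x => (inner ℝ x (unitVec θ) : ℝ)) '' A) -
    sInf ((fun x => (inner ℝ x (unitVec θ) : ℝ)) '' A)

/-- The space `P²` of planar convex polygons: convex hulls of finite sets with at least
two points. -/
def P2 : Set (Set (EuclideanSpace ℝ (Fin 2))) :=
  {A | ∃ s : Finset (EuclideanSpace ℝ (Fin 2)), 2 ≤ s.card ∧ A = convexHull ℝ (s : Set _)}

/-- The collection `D²` of planar sets whose projection length has a unique maximizer
over `θ ∈ [0, π]` (the diameter is attained along a unique segment/direction). -/
def D2 : Set (Set (EuclideanSpace ℝ (Fin 2))) :=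
  {A | ∃! θ, θ ∈ Set.Icc (0:ℝ) π ∧ ∀ θ' ∈ Set.Icc (0:ℝ) π, projLen A θ' ≤ projLen A θ}

abbrev E2 := EuclideanSpace ℝ (Fin 2)

lemma norm_unitVec (θ : ℝ) : ‖unitVec θ‖ = 1 := by
  rw [EuclideanSpace.norm_eq]
  simp [unitVec, Fin.sum_univ_two]

lemma inner_unitVec (x : E2) (θ : ℝ) :
    (inner ℝ x (unitVec θ) : ℝ) = x 0 * Real.cos θ + x 1 * Real.sin θ := by
  simp [PiLp.inner_apply, RCLike.inner_apply, Fin.sum_univ_two, unitVec, mul_comm]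

lemma linmap (θ : ℝ) : IsLinearMap ℝ (fun x : E2 => (inner ℝ x (unitVec θ) : ℝ)) :=
  ⟨fun _ _ => inner_add_left _ _ _, fun _ _ => real_inner_smul_left _ _ _⟩

lemma isGreatest_hull (t : Finset E2) (ht : t.Nonempty) (θ : ℝ) :
    IsGreatest ((fun x => (inner ℝ x (unitVec θ) : ℝ)) '' convexHull ℝ (t : Set E2))
      (t.sup' ht (fun x => (inner ℝ x (unitVec θ) : ℝ))) := by
  set f := fun x : E2 => (inner ℝ x (unitVec θ) : ℝ) with hf
  obtain ⟨x0, hx0, hx0f⟩ := t.exists_mem_eq_sup' ht f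
  constructor
  · exact ⟨x0, subset_convexHull ℝ _ hx0, hx0f.symm⟩
  · rintro z ⟨x, hx, rfl⟩
    have : convexHull ℝ (t : Set E2) ⊆ {w | f w ≤ t.sup' ht f} :=
      convexHull_min (fun y hy => Finset.le_sup' f hy) (convex_halfSpace_le (linmap θ) _)
    exact this hx

lemma isLeast_hull (t : Finset E2) (ht : t.Nonempty) (θ : ℝ) :
    IsLeast ((fun x => (inner ℝ x (unitVec θ) : ℝ)) '' convexHull ℝ (t : Set E2))
      (t.inf' ht (fun x => (inner ℝ x (unitVec θ) : ℝ))) := by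
  set f := fun x : E2 => (inner ℝ x (unitVec θ) : ℝ) with hf
  obtain ⟨x0, hx0, hx0f⟩ := t.exists_mem_eq_inf' ht f
  constructor
  · exact ⟨x0, subset_convexHull ℝ _ hx0, hx0f.symm⟩
  · rintro z ⟨x, hx, rfl⟩
    have : convexHull ℝ (t : Set E2) ⊆ {w | t.inf' ht f ≤ f w} :=
      convexHull_min (fun y hy => Finset.inf'_le f hy) (convex_halfSpace_ge (linmap θ) _)
    exact this hx

lemma projLen_hull (t : Finset E2) (ht : t.Nonempty) (θ : ℝ) :
    projLen (convexHull ℝ (t : Set E2)) θ =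
      t.sup' ht (fun x => (inner ℝ x (unitVec θ) : ℝ)) -
      t.inf' ht (fun x => (inner ℝ x (unitVec θ) : ℝ)) := by
  rw [projLen, (isGreatest_hull t ht θ).csSup_eq, (isLeast_hull t ht θ).csInf_eq]

lemma projLen_pair (t : Finset E2) (ht : t.Nonempty) (θ : ℝ) :
    ∃ x ∈ t, ∃ y ∈ t,
      projLen (convexHull ℝ (t : Set E2)) θ = (inner ℝ (x - y) (unitVec θ) : ℝ) := by
  obtain ⟨x0, hx0, hx0f⟩ := t.exists_mem_eq_sup' ht (fun x => (inner ℝ x (unitVec θ) : ℝ))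
  obtain ⟨y0, hy0, hy0f⟩ := t.exists_mem_eq_inf' ht (fun x => (inner ℝ x (unitVec θ) : ℝ))
  exact ⟨x0, hx0, y0, hy0, by
    rw [projLen_hull t ht θ, hx0f, hy0f, inner_sub_left]⟩

lemma hull_mem_D2 (t : Finset E2) (P Q : E2) (hP : P ∈ t) (hQ : Q ∈ t)
    (hb : 0 < (P - Q) 1)
    (hmax : ∀ x ∈ t, ∀ y ∈ t, ¬(x = P ∧ y = Q) → ¬(x = Q ∧ y = P) → dist x y < dist P Q) :
    convexHull ℝ (t : Set E2) ∈ D2 := by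
  have ht : t.Nonempty := ⟨P, hP⟩
  set a := (P - Q) 0 with ha
  set b := (P - Q) 1 with hbdef
  set d := dist P Q with hddef
  have hPQ : P ≠ Q := by
    intro h
    have hb0 : b = 0 := by simp [hbdef, h]
    linarith
  have hd : 0 < d := dist_pos.mpr hPQ
  have hdn : d = Real.sqrt (a ^ 2 + b ^ 2) := by
    rw [hddef, dist_eq_norm, EuclideanSpace.norm_eq]
    simp [Fin.sum_univ_two, sq_abs, ha, hbdef]
  have hab : a ^ 2 + b ^ 2 = d ^ 2 := by
    rw [hdn, Real.sq_sqrt (by positivity)]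
  have ha2 : -1 ≤ a / d ∧ a / d ≤ 1 := by
    constructor
    · rw [neg_le, ← neg_div]; apply div_le_one_of_le₀ _ hd.le; nlinarith [sq_nonneg b]
    · apply div_le_one_of_le₀ _ hd.le; nlinarith [sq_nonneg b]
  set θ0 := Real.arccos (a / d) with hθ0
  have hmem0 : θ0 ∈ Set.Icc (0:ℝ) π := ⟨Real.arccos_nonneg _, Real.arccos_le_pi _⟩
  have hcos : Real.cos θ0 = a / d := Real.cos_arccos ha2.1 ha2.2
  have hsin : Real.sin θ0 = b / d := by
    rw [hθ0, Real.sin_arccos, show 1 - (a / d) ^ 2 = (b / d) ^ 2 by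
      field_simp; nlinarith]
    exact Real.sqrt_sq (by positivity)
  have hinner0 : (inner ℝ (P - Q) (unitVec θ0) : ℝ) = d := by
    rw [inner_unitVec, ← ha, ← hbdef, hcos, hsin]
    field_simp
    nlinarith
  have hdistle : ∀ x ∈ t, ∀ y ∈ t, dist x y ≤ d := by
    intro x hx y hy
    by_cases h1 : x = P ∧ y = Q
    · rw [h1.1, h1.2]
    by_cases h2 : x = Q ∧ y = P
    · rw [h2.1, h2.2, dist_comm]
    exact (hmax x hx y hy h1 h2).le
  have hinner_le : ∀ (x y : E2) (θ : ℝ), (inner ℝ (x - y) (unitVec θ) : ℝ) ≤ dist x y := by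
    intro x y θ
    calc (inner ℝ (x - y) (unitVec θ) : ℝ) ≤ ‖x - y‖ * ‖unitVec θ‖ := real_inner_le_norm _ _
      _ = dist x y := by rw [norm_unitVec, mul_one, dist_eq_norm]
  have hstrict : ∀ θ ∈ Set.Icc (0:ℝ) π, θ ≠ θ0 → ∀ x ∈ t, ∀ y ∈ t,
      (inner ℝ (x - y) (unitVec θ) : ℝ) < d := by
    intro θ hθ hne x hx y hy
    by_cases h1 : x = P ∧ y = Q
    · obtain ⟨rfl, rfl⟩ := h1
      have hne' : ‖unitVec θ‖ • (x - y) ≠ ‖x - y‖ • unitVec θ := by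
        rw [norm_unitVec, one_smul]
        intro hEq
        have h0 : a = ‖x - y‖ * Real.cos θ := by
          have := congrFun (congrArg WithLp.ofLp hEq) 0
          simpa [unitVec, ha] using this
        rw [← dist_eq_norm, ← hddef] at h0
        have : Real.cos θ = a / d := by field_simp [h0]; linarith
        exact hne (Real.injOn_cos hθ hmem0 (by rw [this, hcos]))
      calc (inner ℝ (x - y) (unitVec θ) : ℝ) < ‖x - y‖ * ‖unitVec θ‖ :=
            inner_lt_norm_mul_iff_real.mpr hne'
        _ = d := by rw [norm_unitVec, mul_one, ← dist_eq_norm, ← hddef]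
    by_cases h2 : x = Q ∧ y = P
    · obtain ⟨rfl, rfl⟩ := h2
      have hne' : ‖unitVec θ‖ • (x - y) ≠ ‖x - y‖ • unitVec θ := by
        rw [norm_unitVec, one_smul]
        intro hEq
        have h1' : (x - y) 1 = ‖x - y‖ * Real.sin θ := by
          have := congrFun (congrArg WithLp.ofLp hEq) 1
          simpa [unitVec] using this
        have hxy : (x - y) 1 = -b := by simp [hbdef]
        have hsn : 0 ≤ Real.sin θ := Real.sin_nonneg_of_nonneg_of_le_pi hθ.1 hθ.2
        nlinarith [norm_nonneg (x - y)]
      calc (inner ℝ (x - y) (unitVec θ) : ℝ) < ‖x - y‖ * ‖unitVec θ‖ :=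
            inner_lt_norm_mul_iff_real.mpr hne'
        _ = dist x y := by rw [norm_unitVec, mul_one, dist_eq_norm]
        _ ≤ d := hdistle _ hx _ hy
    · exact lt_of_le_of_lt (hinner_le x y θ) (hmax x hx y hy h1 h2)
  have hF0 : projLen (convexHull ℝ (t : Set E2)) θ0 = d := by
    apply le_antisymm
    · obtain ⟨x, hx, y, hy, hxy⟩ := projLen_pair t ht θ0
      rw [hxy]
      exact le_trans (hinner_le x y θ0) (hdistle x hx y hy)
    · rw [projLen_hull t ht θ0]
      have h1 := Finset.le_sup' (fun x : E2 => (inner ℝ x (unitVec θ0) : ℝ)) hP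
      have h2 := Finset.inf'_le (fun x : E2 => (inner ℝ x (unitVec θ0) : ℝ)) hQ
      have : (inner ℝ P (unitVec θ0) : ℝ) - (inner ℝ Q (unitVec θ0) : ℝ) = d := by
        rw [← inner_sub_left]; exact hinner0
      linarith
  have hFlt : ∀ θ ∈ Set.Icc (0:ℝ) π, θ ≠ θ0 →
      projLen (convexHull ℝ (t : Set E2)) θ < d := by
    intro θ hθ hne
    obtain ⟨x, hx, y, hy, hxy⟩ := projLen_pair t ht θ
    rw [hxy]
    exact hstrict θ hθ hne x hx y hy
  refine ⟨θ0, ⟨hmem0, fun θ' hθ' => ?_⟩, fun θ1 h1 => ?_⟩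
  · rw [hF0]
    rcases eq_or_ne θ' θ0 with rfl | h
    · rw [hF0]
    · exact (hFlt θ' hθ' h).le
  · by_contra hne
    have h2 := h1.2 θ0 hmem0
    rw [hF0] at h2
    exact absurd (lt_of_le_of_lt h2 (hFlt θ1 h1.1 hne)) (lt_irrefl d)

noncomputable def e2 : E2 := WithLp.toLp 2 ![0, 1]

lemma inner_e2 (x : E2) : (inner ℝ x e2 : ℝ) = x 1 := by
  simp [PiLp.inner_apply, RCLike.inner_apply, Fin.sum_univ_two, e2]

lemma abs_coord1_le_norm (x : E2) : |x 1| ≤ ‖x‖ := by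
  have h : ‖x‖ = Real.sqrt ((x 0) ^ 2 + (x 1) ^ 2) := by
    rw [EuclideanSpace.norm_eq]; simp [Fin.sum_univ_two, sq_abs]
  rw [h, ← Real.sqrt_sq_eq_abs]
  exact Real.sqrt_le_sqrt (by nlinarith [sq_nonneg (x 0)])


set_option maxHeartbeats 1600000 in
/-- The convex polygons with a unique diametral direction are dense in the space of all
convex polygons, with respect to the Hausdorff metric. -/
theorem P2_inter_D2_dense :
    ∀ A ∈ P2, ∀ ε > 0, ∃ B ∈ P2 ∩ D2, hausdorffDist A B < ε := by
  classical
  rintro A ⟨s, hs2, rfl⟩ ε hε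
  -- a diametral pair of s
  obtain ⟨a0, ha0, b0, hb0, hab0⟩ := Finset.one_lt_card.mp hs2
  have hsne : s.Nonempty := ⟨a0, ha0⟩
  obtain ⟨pq, hpqmem, hpqmax⟩ :=
    Finset.exists_max_image (s ×ˢ s) (fun z => dist z.1 z.2) (hsne.product hsne)
  set p := pq.1 with hpdef
  set q := pq.2 with hqdef
  have hp : p ∈ s := (Finset.mem_product.mp hpqmem).1
  have hq : q ∈ s := (Finset.mem_product.mp hpqmem).2
  have hmax' : ∀ x ∈ s, ∀ y ∈ s, dist x y ≤ dist p q := by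
    intro x hx y hy
    exact hpqmax (x, y) (Finset.mem_product.mpr ⟨hx, hy⟩)
  set d := dist p q with hddef
  have hd : 0 < d :=
    lt_of_lt_of_le (dist_pos.mpr hab0) (hmax' a0 ha0 b0 hb0)
  have hpq : p ≠ q := by
    intro h; rw [hddef, h, dist_self] at hd; exact lt_irrefl 0 hd
  have hnormpq : ‖p - q‖ = d := by rw [hddef, dist_eq_norm]
  -- the gap
  have hperase : p ∈ s.erase q := Finset.mem_erase.mpr ⟨hpq, hp⟩
  set M := (s.erase q).sup' ⟨p, hperase⟩ (fun v => (inner ℝ (p - v) (p - q) : ℝ)) with hMdef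
  have hM : M < d ^ 2 := by
    rw [hMdef]; refine (Finset.sup'_lt_iff _).mpr ?_
    intro v hv
    obtain ⟨hvq, hvs⟩ := Finset.mem_erase.mp hv
    have hle : ‖p - v‖ ≤ d := by rw [← dist_eq_norm]; exact hmax' p hp v hvs
    rcases lt_or_eq_of_le hle with hlt | heq
    · calc (inner ℝ (p - v) (p - q) : ℝ) ≤ ‖p - v‖ * ‖p - q‖ := real_inner_le_norm _ _
        _ = ‖p - v‖ * d := by rw [hnormpq]
        _ < d * d := by nlinarith
        _ = d ^ 2 := by ring
    · have hne : ‖p - q‖ • (p - v) ≠ ‖p - v‖ • (p - q) := by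
        rw [hnormpq, heq]
        intro hEq
        have : p - v = p - q := smul_right_injective E2 (ne_of_gt hd) hEq
        exact hvq (sub_right_injective this)
      calc (inner ℝ (p - v) (p - q) : ℝ) < ‖p - v‖ * ‖p - q‖ :=
            inner_lt_norm_mul_iff_real.mpr hne
        _ = d ^ 2 := by rw [hnormpq, heq]; ring
  set η := (d ^ 2 - M) / (2 * d) with hηdef
  have hη : 0 < η := by apply div_pos (by linarith) (by linarith)
  have hηd : M + η * d < d ^ 2 := by
    have hd0 : d ≠ 0 := ne_of_gt hd
    have h1 : η * d = (d ^ 2 - M) / 2 := by rw [hηdef]; field_simp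
    rw [h1]; linarith
  clear hηdef
  clear_value M η
  -- the sign and perturbation vector
  obtain ⟨σ, hσpq, hσcase⟩ : ∃ σ : ℝ, 0 ≤ σ * (p - q) 1 ∧
      ((σ = 1 ∧ 0 ≤ (p - q) 1) ∨ (σ = -1 ∧ (p - q) 1 < 0)) := by
    rcases le_or_gt 0 ((p - q) 1) with h | h
    · exact ⟨1, by simpa using h, Or.inl ⟨rfl, h⟩⟩
    · exact ⟨-1, by nlinarith, Or.inr ⟨rfl, h⟩⟩
  have hσ : σ = 1 ∨ σ = -1 := hσcase.elim (fun h => Or.inl h.1) (fun h => Or.inr h.1)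
  set w : E2 := (p - q) + (η * σ) • e2 with hwdef
  have hinnerw : ∀ x : E2, (inner ℝ x w : ℝ) = (inner ℝ x (p - q) : ℝ) + η * σ * x 1 := by
    intro x
    rw [hwdef, inner_add_right, real_inner_smul_right, inner_e2]
  have hwq : (d:ℝ) ^ 2 ≤ (inner ℝ (p - q) w : ℝ) := by
    rw [hinnerw, real_inner_self_eq_norm_sq, hnormpq]
    nlinarith
  have hwv : ∀ v ∈ s, v ≠ q → (inner ℝ (p - v) w : ℝ) < (inner ℝ (p - q) w : ℝ) := by
    intro v hvs hvq
    have h1 : (inner ℝ (p - v) (p - q) : ℝ) ≤ M := by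
      rw [hMdef]
      exact Finset.le_sup' (fun v => (inner ℝ (p - v) (p - q) : ℝ))
        (Finset.mem_erase.mpr ⟨hvq, hvs⟩)
    have h2 : σ * (p - v) 1 ≤ |(p - v) 1| := by
      rcases hσ with h | h <;> rw [h]
      · simpa using le_abs_self ((p - v) 1)
      · rw [neg_one_mul]; exact neg_le_abs ((p - v) 1)
    have h3 : |(p - v) 1| ≤ d := by
      refine (abs_coord1_le_norm _).trans ?_
      rw [← dist_eq_norm]; exact hmax' p hp v hvs
    rw [hinnerw, hinnerw]
    have : η * σ * (p - v) 1 ≤ η * d := by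
      calc η * σ * (p - v) 1 = η * (σ * (p - v) 1) := by ring
        _ ≤ η * |(p - v) 1| := by nlinarith
        _ ≤ η * d := by nlinarith
    have h4 : (inner ℝ (p - q) (p - q) : ℝ) = d ^ 2 := by
      rw [real_inner_self_eq_norm_sq, hnormpq]
    nlinarith
  have hw1 : w 1 = (p - q) 1 + η * σ := by
    rw [hwdef]
    simp [e2, PiLp.add_apply, PiLp.smul_apply]
  clear hwdef hinnerw
  clear_value w
  -- the perturbed point
  have hwn : (0:ℝ) < 2 * (‖w‖ + 1) := by have := norm_nonneg w; linarith
  obtain ⟨δ', hδ', hδ'w⟩ : ∃ x : ℝ, 0 < x ∧ x * ‖w‖ ≤ ε / 2 := by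
    refine ⟨ε / (2 * (‖w‖ + 1)), div_pos hε hwn, ?_⟩
    rw [div_mul_eq_mul_div, div_le_div_iff₀ hwn (by norm_num)]
    nlinarith [norm_nonneg w]
  set p' : E2 := p + δ' • w with hp'def
  have hdistp' : dist p' p ≤ ε / 2 := by
    rw [hp'def, dist_eq_norm]
    have : p + δ' • w - p = δ' • w := by abel
    rw [this, norm_smul, Real.norm_eq_abs, abs_of_pos hδ']
    exact hδ'w
  -- distance comparisons
  have hsub : ∀ x : E2, p' - x = (p - x) + δ' • w := by
    intro x; rw [hp'def]; abel
  have hsq : ∀ x : E2, ‖p' - x‖ ^ 2 =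
      ‖p - x‖ ^ 2 + 2 * δ' * (inner ℝ (p - x) w : ℝ) + δ' ^ 2 * ‖w‖ ^ 2 := by
    intro x
    rw [hsub x, norm_add_sq_real, real_inner_smul_right, norm_smul, Real.norm_eq_abs,
      abs_of_pos hδ', mul_pow]
    ring
  have hq'gt : d < dist p' q := by
    have h := hsq q
    rw [hnormpq] at h
    apply lt_of_pow_lt_pow_left₀ 2 dist_nonneg
    rw [dist_eq_norm, h]
    nlinarith [mul_le_mul_of_nonneg_left hwq hδ'.le, sq_nonneg (δ' * ‖w‖),
      mul_pos hδ' (pow_pos hd 2)]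
  have hv'lt : ∀ v ∈ s, v ≠ q → dist p' v < dist p' q := by
    intro v hvs hvq
    apply lt_of_pow_lt_pow_left₀ 2 dist_nonneg
    rw [dist_eq_norm, dist_eq_norm, hsq v, hsq q, hnormpq]
    have h1 : ‖p - v‖ ≤ d := by rw [← dist_eq_norm]; exact hmax' p hp v hvs
    have h2 := hwv v hvs hvq
    nlinarith [norm_nonneg (p - v)]
  -- the new finset
  set t : Finset E2 := insert p' s with htdef
  have hmaxt : ∀ x ∈ t, ∀ y ∈ t, ¬(x = p' ∧ y = q) → ¬(x = q ∧ y = p') → dist x y < dist p' q := by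
    intro x hx y hy h1 h2
    rcases Finset.mem_insert.mp hx with rfl | hxs
    · rcases Finset.mem_insert.mp hy with rfl | hys
      · rw [dist_self]; exact lt_of_le_of_lt hd.le hq'gt
      · rcases eq_or_ne y q with rfl | hyq
        · exact absurd ⟨rfl, rfl⟩ h1
        · exact hv'lt y hys hyq
    · rcases Finset.mem_insert.mp hy with rfl | hys
      · rcases eq_or_ne x q with rfl | hxq
        · exact absurd ⟨rfl, rfl⟩ h2
        · rw [dist_comm]; exact hv'lt x hxs hxq
      · exact lt_of_le_of_lt (hmax' x hxs y hys) hq'gt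
  have hp't : p' ∈ t := Finset.mem_insert_self _ _
  have hqt : q ∈ t := Finset.mem_insert_of_mem hq
  -- second coordinate of p' - q
  have hcoord : (p' - q) 1 = (p - q) 1 + δ' * ((p - q) 1 + η * σ) := by
    have h := hsub q
    have h2 : (p' - q) 1 = (p - q) 1 + δ' * w 1 := by
      rw [h]; simp [PiLp.add_apply, PiLp.smul_apply]
    rw [h2, hw1]
  clear hp'def hsub hsq
  clear_value p'
  -- D2 membership
  have hD2 : convexHull ℝ (t : Set E2) ∈ D2 := by
    rcases hσcase with ⟨hσ1, hsgn⟩ | ⟨hσ1, hsgn⟩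
    · have hbpos : 0 < (p' - q) 1 := by
        rw [hcoord, hσ1]; nlinarith
      exact hull_mem_D2 t p' q hp't hqt hbpos hmaxt
    · have hbpos : 0 < (q - p') 1 := by
        have h1 : (q - p') 1 = -((p' - q) 1) := by
          simp [PiLp.sub_apply]
        rw [h1, hcoord, hσ1]
        nlinarith
      refine hull_mem_D2 t q p' hqt hp't hbpos ?_
      intro x hx y hy h1 h2
      rw [dist_comm q p']
      exact hmaxt x hx y hy
        (fun h => h2 ⟨h.1, h.2⟩) (fun h => h1 ⟨h.1, h.2⟩)
  -- P2 membership
  have hP2 : convexHull ℝ (t : Set E2) ∈ P2 :=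
    ⟨t, le_trans hs2 (Finset.card_le_card (Finset.subset_insert _ _)), rfl⟩
  refine ⟨convexHull ℝ (t : Set E2), ⟨hP2, hD2⟩, ?_⟩
  -- Hausdorff distance
  have hAB : convexHull ℝ (s : Set E2) ⊆ convexHull ℝ (t : Set E2) :=
    convexHull_mono (by rw [htdef]; simp [Set.subset_insert]  )
  have hBthick : convexHull ℝ (t : Set E2) ⊆ cthickening (ε/2) (convexHull ℝ (s : Set E2)) := by
    apply convexHull_min _ ((convex_convexHull ℝ _).cthickening _)
    rw [htdef, Finset.coe_insert]
    rintro z (rfl | hz)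
    · exact mem_cthickening_of_dist_le z p _ _ (subset_convexHull ℝ _ hp) hdistp'
    · exact self_subset_cthickening _ (subset_convexHull ℝ _ hz)
  have hH : hausdorffDist (convexHull ℝ (s : Set E2)) (convexHull ℝ (t : Set E2)) ≤ ε / 2 := by
    apply hausdorffDist_le_of_infDist (by positivity)
    · intro x hx
      have h0 : infDist x (convexHull ℝ (t : Set E2)) ≤ dist x x :=
        infDist_le_dist_of_mem (hAB hx)
      rw [dist_self] at h0
      linarith
    · intro y hy
      have h := hBthick hy
      rw [mem_cthickening_iff] at h
      exact ENNReal.toReal_le_of_le_ofReal (by positivity) h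
  linarith
end

section
/- Let a_{i_l} be a vertex of a convex polygon A with adjacent-edge unit vectors u^{(1)}, u^{(2)} and half-angle φ between each edge direction and their bisector u^{(1)}+u^{(2)}. If B is a convex polygon with ρ_H²(A,B) < δ, then the vertex b of B minimizing the linear functional x ↦ (u^{(1)}+u^{(2)})·x satisfies ‖b − a_{i_l}‖ ≤ 2δ/(cos φ · sin φ). -/
open Real Metric Set

private lemma sq_le_of_between {X M : ℝ} (h1 : X < M) (h2 : -M < X) : X^2 ≤ M^2 := by nlinarith

private lemma le_of_sq_le' {X M : ℝ} (hM : 0 ≤ M) (h : X^2 ≤ M^2) : X ≤ M := by nlinarith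

private lemma neg_le_of_sq_le' {X M : ℝ} (hM : 0 ≤ M) (h : X^2 ≤ M^2) : -M ≤ X := by nlinarith

private lemma stepCS (c s E α β : ℝ) (hc : 0 < c) (hs : 0 < s) (hE : 0 ≤ E)
    (hpyth : s^2 + c^2 = 1)
    (hbes : s^2*(α+β)^2 + c^2*(α-β)^2 ≤ 4*c^2*s^2*E^2) :
    c^2*(α-β) - s^2*(α+β) ≤ 2*c*s*E := by
  have hsq : (c^2*(α-β) - s^2*(α+β))^2 ≤ (2*c*s*E)^2 := by
    nlinarith [hbes, sq_nonneg (c*s*((α+β)+(α-β)))]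
  exact le_of_sq_le' (by positivity) hsq

private lemma step_ab_low (c E α β : ℝ) (hc : 0 < c) (hs_dummy : True) (hE : 0 ≤ E)
    (hab2 : (α+β)^2 ≤ 4*c^2*E^2) : -(2*c*E) ≤ α+β := by
  have := neg_le_of_sq_le' (M := 2*c*E) (by positivity) (by nlinarith [hab2])
  linarith

private lemma step_ab2 (c s E α β : ℝ) (hs : 0 < s)
    (hbes : s^2*(α+β)^2 + c^2*(α-β)^2 ≤ 4*c^2*s^2*E^2) :
    (α+β)^2 ≤ 4*c^2*E^2 := by
  nlinarith [hbes, mul_nonneg (sq_nonneg c) (sq_nonneg (α-β)), mul_pos hs hs]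

private lemma step_fin (s δ : ℝ) (hs : 0 < s) (hs1 : s ≤ 1) (hδ : 0 < δ) (c : ℝ)
    (hpyth : s^2 + c^2 = 1) :
    s^2*(4*c^2*δ^2) + 4*s^2*(1+s)^2*δ^2 + 4*s^2*c^2*δ^2 ≤ 16*δ^2 := by
  have hs4 : s^2*(3+2*s-s^2) ≤ 4 := by
    nlinarith [mul_nonneg (by linarith : (0:ℝ) ≤ 1-s)
      (by nlinarith : (0:ℝ) ≤ s^2*(1-s)+4*(1+s))]
  have hcc : c^2 = 1 - s^2 := by linarith
  rw [hcc]
  nlinarith [mul_le_mul_of_nonneg_left hs4 (sq_nonneg δ)]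

set_option maxHeartbeats 1000000 in
/-- Pure scalar endgame. -/
lemma minimizer_near_vertex_scalar (c s δ E σ τ α β n : ℝ)
    (hc : 0 < c) (hs : 0 < s) (hs1 : s ≤ 1) (hpyth : s^2 + c^2 = 1)
    (hδ : 0 < δ) (hE : 0 ≤ E) (hEδ : E < δ) (hσ : 0 ≤ σ) (hτ : 0 ≤ τ)
    (hn : 0 ≤ n)
    (hnorm : n^2 = σ^2 + τ^2 + 2*σ*τ*(2*c^2-1) + 2*σ*α + 2*τ*β + E^2)
    (hbes : s^2*(α+β)^2 + c^2*(α-β)^2 ≤ 4*c^2*s^2*E^2)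
    (hmin : (σ+τ)*(2*c^2) + (α+β) < 2*c*δ) :
    n ≤ 2*δ/(c*s) := by
  have hX : 2*c^2*(σ+τ) + (α+β) < 2*c*δ := by linarith
  have hab_low : -(2*c*E) ≤ α+β :=
    step_ab_low c E α β hc trivial hE (step_ab2 c s E α β hs hbes)
  have hcE : 2*c*E < 2*c*δ := mul_lt_mul_of_pos_left hEδ (by linarith)
  have hTnn : 0 ≤ 2*c^2*(σ+τ) :=
    mul_nonneg (by positivity) (by linarith)
  have hXlow : -(2*c*δ) < 2*c^2*(σ+τ) + (α+β) := by linarith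
  have hPsq : (2*c^2*(σ+τ) + (α+β))^2 ≤ (2*c*δ)^2 := sq_le_of_between hX hXlow
  have hCS1 : c^2*(α-β) - s^2*(α+β) ≤ 2*c*s*E := stepCS c s E α β hc hs hE hpyth hbes
  have hCS2 : -(c^2*(α-β)) - s^2*(α+β) ≤ 2*c*s*E := by
    have := stepCS c s E β α hc hs hE hpyth (by nlinarith [hbes])
    linarith [this]
  have hDle : 2*s^2*c^2*(σ-τ) ≤ s^2*(2*c^2*(σ+τ)) := by
    linarith [mul_nonneg (sq_nonneg s) (mul_nonneg (sq_nonneg c) hτ)]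
  have hDge : -(s^2*(2*c^2*(σ+τ))) ≤ 2*s^2*c^2*(σ-τ) := by
    linarith [mul_nonneg (sq_nonneg s) (mul_nonneg (sq_nonneg c) hσ)]
  have hEδ2 : 2*c*s*E < 2*c*s*δ := mul_lt_mul_of_pos_left hEδ (by positivity)
  have h1 : s^2*(2*c^2*(σ+τ)) < s^2*(2*c*δ - (α+β)) :=
    mul_lt_mul_of_pos_left (by linarith) (by positivity)
  have hY1 : c*(c*(2*s^2*(σ-τ) + (α-β))) < c*(2*s*(1+s)*δ) := by linarith [hDle, hCS1, hEδ2, h1]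
  have hY2 : c*(-(c*(2*s^2*(σ-τ) + (α-β)))) < c*(2*s*(1+s)*δ) := by linarith [hDge, hCS2, hEδ2, h1]
  have hY1' : c*(2*s^2*(σ-τ) + (α-β)) < 2*s*(1+s)*δ := (mul_lt_mul_iff_right₀ hc).mp hY1
  have hY2' : -(2*s*(1+s)*δ) < c*(2*s^2*(σ-τ) + (α-β)) := by
    have := (mul_lt_mul_iff_right₀ hc).mp hY2; linarith
  have hQsq : (c*(2*s^2*(σ-τ) + (α-β)))^2 ≤ (2*s*(1+s)*δ)^2 := sq_le_of_between hY1' hY2'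
  have hkeyid : 4*s^2*c^2*n^2 =
      s^2*(2*c^2*(σ+τ) + (α+β))^2 + (c*(2*s^2*(σ-τ) + (α-β)))^2 +
      (4*s^2*c^2*E^2 - s^2*(α+β)^2 - c^2*(α-β)^2) := by
    linear_combination (4*s^2*c^2) * hnorm - 4*s^2*c^2*(σ-τ)^2 * hpyth
  have hE2 : E^2 ≤ δ^2 := by nlinarith [hE, hEδ]
  have hZ : 4*s^2*c^2*E^2 - s^2*(α+β)^2 - c^2*(α-β)^2 ≤ 4*s^2*c^2*δ^2 := by
    have h2 := mul_le_mul_of_nonneg_left hE2 (by positivity : (0:ℝ) ≤ 4*s^2*c^2)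
    have h3 : 0 ≤ s^2*(α+β)^2 := mul_nonneg (sq_nonneg s) (sq_nonneg _)
    have h4 : 0 ≤ c^2*(α-β)^2 := mul_nonneg (sq_nonneg c) (sq_nonneg _)
    linarith
  have hPs : s^2*(2*c^2*(σ+τ) + (α+β))^2 ≤ s^2*(2*c*δ)^2 :=
    mul_le_mul_of_nonneg_left hPsq (sq_nonneg s)
  have hfin := step_fin s δ hs hs1 hδ c hpyth
  have hstep : 4*s^2*c^2*n^2 ≤ 16*δ^2 := by linarith [hkeyid, hPs, hQsq, hZ, hfin]
  have hcs : 0 < c*s := mul_pos hc hs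
  rw [le_div_iff₀ hcs]
  have h2n : (n*(c*s))^2 ≤ (2*δ)^2 := by linarith [hstep]
  exact le_of_sq_le' (by linarith) h2n

set_option maxHeartbeats 1000000 in
/-- If `A` lies in the cone at its vertex `a` spanned by the unit edge directions `u₁, u₂`
(with half-angle `φ` between each edge direction and the bisector `u₁ + u₂`), `B` is a
convex body at Hausdorff distance `< δ` from `A`, and `b ∈ B` minimizes the linear
functional `x ↦ ⟪u₁ + u₂, x⟫` over `B`, then `‖b - a‖ ≤ 2δ / (cos φ · sin φ)`. -/
theorem minimizer_near_vertex (A B : Set (EuclideanSpace ℝ (Fin 2)))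
    (hAne : A.Nonempty) (hAc : IsCompact A) (hAconv : Convex ℝ A)
    (hBne : B.Nonempty) (hBc : IsCompact B) (hBconv : Convex ℝ B)
    (a : EuclideanSpace ℝ (Fin 2)) (ha : a ∈ A)
    (u₁ u₂ : EuclideanSpace ℝ (Fin 2)) (hu₁ : ‖u₁‖ = 1) (hu₂ : ‖u₂‖ = 1)
    (hcone : ∀ x ∈ A, ∃ s t : ℝ, 0 ≤ s ∧ 0 ≤ t ∧ x = a + s • u₁ + t • u₂)
    (φ δ : ℝ) (hφ : φ ∈ Set.Ioo 0 (π / 2))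
    (hcos1 : Real.cos φ = (inner ℝ u₁ (u₁ + u₂) : ℝ) / ‖u₁ + u₂‖)
    (hcos2 : Real.cos φ = (inner ℝ u₂ (u₁ + u₂) : ℝ) / ‖u₁ + u₂‖)
    (hδ : 0 < δ) (hH : hausdorffDist A B < δ)
    (b : EuclideanSpace ℝ (Fin 2)) (hb : b ∈ B)
    (hmin : ∀ x ∈ B, (inner ℝ (u₁ + u₂) b : ℝ) ≤ (inner ℝ (u₁ + u₂) x : ℝ)) :
    ‖b - a‖ ≤ 2 * δ / (Real.cos φ * Real.sin φ) := by
  obtain ⟨hφ0, hφ2⟩ := hφ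
  have hπ : (0:ℝ) < π := Real.pi_pos
  set c := Real.cos φ with hcdef
  set s := Real.sin φ with hsdef
  have hcpos : 0 < c := Real.cos_pos_of_mem_Ioo ⟨by linarith, hφ2⟩
  have hspos : 0 < s := Real.sin_pos_of_pos_of_lt_pi hφ0 (by linarith)
  have hpyth : s^2 + c^2 = 1 := Real.sin_sq_add_cos_sq φ
  have hsle : s ≤ 1 := Real.sin_le_one φ
  -- norm of v = u₁ + u₂
  have hvne : ‖u₁ + u₂‖ ≠ 0 := by
    intro h
    rw [h, div_zero] at hcos1
    exact absurd hcos1 (ne_of_gt hcpos)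
  have hI1v : (inner ℝ u₁ (u₁+u₂) : ℝ) = c * ‖u₁+u₂‖ := (div_eq_iff hvne).mp hcos1.symm
  have hI2v : (inner ℝ u₂ (u₁+u₂) : ℝ) = c * ‖u₁+u₂‖ := (div_eq_iff hvne).mp hcos2.symm
  have hvv : (inner ℝ (u₁+u₂) (u₁+u₂) : ℝ) = ‖u₁+u₂‖^2 := real_inner_self_eq_norm_sq _
  have hexp : (inner ℝ (u₁+u₂) (u₁+u₂) : ℝ) = inner ℝ u₁ (u₁+u₂) + inner ℝ u₂ (u₁+u₂) :=
    inner_add_left _ _ _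
  have hNv : ‖u₁+u₂‖ = 2*c := by
    have h1 : ‖u₁+u₂‖ * ‖u₁+u₂‖ = ‖u₁+u₂‖ * (2*c) := by
      rw [hI1v, hI2v] at hexp; rw [hvv] at hexp; nlinarith [hexp]
    exact mul_left_cancel₀ hvne h1
  have I11 : (inner ℝ u₁ u₁ : ℝ) = 1 := by
    rw [real_inner_self_eq_norm_sq, hu₁]; norm_num
  have I22 : (inner ℝ u₂ u₂ : ℝ) = 1 := by
    rw [real_inner_self_eq_norm_sq, hu₂]; norm_num
  have I12 : (inner ℝ u₁ u₂ : ℝ) = 2*c^2 - 1 := by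
    have h := hI1v
    rw [inner_add_right, I11, hNv] at h
    linarith [h]
  have I21 : (inner ℝ u₂ u₁ : ℝ) = 2*c^2 - 1 := by rw [real_inner_comm]; exact I12
  -- points from Hausdorff distance
  have hEdist : EMetric.hausdorffEdist A B ≠ ⊤ :=
    Metric.hausdorffEdist_ne_top_of_nonempty_of_bounded hAne hBne hAc.isBounded hBc.isBounded
  obtain ⟨b', hb'B, hab'⟩ := Metric.exists_dist_lt_of_hausdorffDist_lt ha hH hEdist
  obtain ⟨x, hxA, hxb⟩ := Metric.exists_dist_lt_of_hausdorffDist_lt' hb hH hEdist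
  obtain ⟨σ, τ, hσ, hτ, hxeq⟩ := hcone x hxA
  set e : EuclideanSpace ℝ (Fin 2) := b - x with hedef
  have hEδ : ‖e‖ < δ := by
    rw [hedef, ← dist_eq_norm, dist_comm]; exact hxb
  set α := (inner ℝ u₁ e : ℝ) with hαdef
  set β := (inner ℝ u₂ e : ℝ) with hβdef
  have Ie1 : (inner ℝ e u₁ : ℝ) = α := by rw [real_inner_comm]
  have Ie2 : (inner ℝ e u₂ : ℝ) = β := by rw [real_inner_comm]
  have Iee : (inner ℝ e e : ℝ) = ‖e‖^2 := real_inner_self_eq_norm_sq _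
  have hC : b - a = σ • u₁ + τ • u₂ + e := by
    rw [hedef, hxeq]; abel
  -- norm expansion
  have h_norm : ‖b - a‖^2 = σ^2 + τ^2 + 2*σ*τ*(2*c^2-1) + 2*σ*α + 2*τ*β + ‖e‖^2 := by
    rw [← real_inner_self_eq_norm_sq, hC]
    simp only [inner_add_left, inner_add_right, real_inner_smul_left, real_inner_smul_right,
      I11, I22, I12, I21, ← hαdef, ← hβdef, Ie1, Ie2, Iee]
    ring
  -- minimality
  have hminC : (σ+τ)*(2*c^2) + (α+β) < 2*c*δ := by
    have h4 : (inner ℝ (u₁+u₂) (b-a) : ℝ) = (σ+τ)*(2*c^2) + (α+β) := by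
      rw [hC]
      simp only [inner_add_left, inner_add_right, real_inner_smul_right,
        I11, I22, I12, I21, ← hαdef, ← hβdef]
      ring
    have h1 : (inner ℝ (u₁+u₂) (b-a) : ℝ) ≤ inner ℝ (u₁+u₂) (b'-a) := by
      rw [inner_sub_right, inner_sub_right]
      have := hmin b' hb'B
      linarith
    have h2 : (inner ℝ (u₁+u₂) (b'-a) : ℝ) ≤ ‖u₁+u₂‖ * ‖b'-a‖ := real_inner_le_norm _ _
    have h3 : ‖b'-a‖ < δ := by rw [← dist_eq_norm, dist_comm]; exact hab'
    have h5 : ‖u₁+u₂‖ * ‖b'-a‖ < 2*c*δ := by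
      rw [hNv]
      exact mul_lt_mul_of_pos_left h3 (by linarith)
    rw [h4] at h1
    linarith
  -- Bessel inequality (scaled, no divisions)
  have hbes : s^2*(α+β)^2 + c^2*(α-β)^2 ≤ 4*c^2*s^2*‖e‖^2 := by
    have h0 : (0:ℝ) ≤ inner ℝ
        ((4*c^2*s^2) • e - (s^2*(α+β)) • (u₁+u₂) - (c^2*(α-β)) • (u₁-u₂))
        ((4*c^2*s^2) • e - (s^2*(α+β)) • (u₁+u₂) - (c^2*(α-β)) • (u₁-u₂)) :=
      real_inner_self_nonneg
    have hzz : (inner ℝ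
        ((4*c^2*s^2) • e - (s^2*(α+β)) • (u₁+u₂) - (c^2*(α-β)) • (u₁-u₂))
        ((4*c^2*s^2) • e - (s^2*(α+β)) • (u₁+u₂) - (c^2*(α-β)) • (u₁-u₂)) : ℝ)
        = (4*c^2*s^2) * (4*c^2*s^2*‖e‖^2 - (s^2*(α+β)^2 + c^2*(α-β)^2)) := by
      simp only [inner_sub_left, inner_sub_right, inner_add_left, inner_add_right,
        real_inner_smul_left, real_inner_smul_right,
        I11, I22, I12, I21, ← hαdef, ← hβdef, Ie1, Ie2, Iee]
      linear_combination (-4*c^4*(α-β)^2) * hpyth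
    rw [hzz] at h0
    have h4 : (0:ℝ) < 4*c^2*s^2 := by positivity
    have h5 := (mul_nonneg_iff_of_pos_left h4).mp h0
    linarith
  exact minimizer_near_vertex_scalar c s δ ‖e‖ σ τ α β ‖b-a‖
    hcpos hspos hsle hpyth hδ (norm_nonneg e) hEδ hσ hτ (norm_nonneg _)
    h_norm hbes hminC
end
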